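/- arXiv:0810.0318 — 2 statements merged into one kernel-verified Lean document; each statement's English description precedes it below -/
import Mathlib

section
/- Let F : [t₁, t₂] → ℝ be differentiable with F(t) ≥ e^e for all t ∈ [t₁, t₂]. Suppose that for all t ∈ [t₁, t₂], F'(t) ≤ F(t) · ln(F(t)) · ln(ln(F(t))). Then for all t ∈ [t₁, t₂], F(t) ≤ exp(exp(exp((t - t₁) + ln(ln(ln(F(t₁))))))). -/
/-!
The triple logarithm `G = log ∘ log ∘ log ∘ F` is well defined since `F ≥ e^e`, and by the chain
rule `G' = F' / (F log F log log F) ≤ 1`. Hence `G t ≤ G t₁ + (t - t₁)` by the mean value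
inequality, and exponentiating three times gives the bound on `F`.
-/

open Real Set

theorem pos_and_log_pos_and_one_le_log_log_of_exp_exp_one_le {x : ℝ} (hx : exp (exp 1) ≤ x) :
    0 < x ∧ 0 < log x ∧ 1 ≤ log (log x) := by
  have hx₀ : 0 < x := (exp_pos _).trans_le hx
  have hlog : exp 1 ≤ log x := (le_log_iff_exp_le hx₀).mpr hx
  have hlog₀ : 0 < log x := (exp_pos _).trans_le hlog
  exact ⟨hx₀, hlog₀, (le_log_iff_exp_le hlog₀).mpr hlog⟩

theorem le_exp_exp_exp_of_log_log_log_le {x y : ℝ} (hx : exp (exp 1) ≤ x)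
    (h : log (log (log x)) ≤ y) : x ≤ exp (exp (exp y)) := by
  obtain ⟨hx₀, hlog₀, hloglog⟩ := pos_and_log_pos_and_one_le_log_log_of_exp_exp_one_le hx
  rwa [← log_le_iff_le_exp hx₀, ← log_le_iff_le_exp hlog₀, ← log_le_iff_le_exp (by positivity)]

theorem hasDerivAt_log_log_log {f : ℝ → ℝ} {f' x : ℝ} (hf : HasDerivAt f f' x)
    (hx : exp (exp 1) ≤ f x) :
    HasDerivAt (fun y => log (log (log (f y))))
      (f' / (f x * log (f x) * log (log (f x)))) x := by
  obtain ⟨hx₀, hlog₀, hloglog⟩ := pos_and_log_pos_and_one_le_log_log_of_exp_exp_one_le hx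
  convert ((hf.log hx₀.ne').log hlog₀.ne').log (by positivity) using 1
  field_simp

theorem sub_le_mul_sub_of_hasDerivAt_le_on_Icc {g g' : ℝ → ℝ} {a b C : ℝ}
    (hg : ∀ t ∈ Icc a b, HasDerivAt g (g' t) t) (hg' : ∀ t ∈ Icc a b, g' t ≤ C) :
    ∀ t ∈ Icc a b, g t - g a ≤ C * (t - a) := by
  intro t ht
  have hD : interior (Icc a b) ⊆ Icc a b := interior_subset
  exact (convex_Icc a b).image_sub_le_mul_sub_of_deriv_le
    (fun s hs => (hg s hs).continuousAt.continuousWithinAt)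
    (fun s hs => (hg s (hD hs)).differentiableAt.differentiableWithinAt)
    (fun s hs => (hg s (hD hs)).deriv ▸ hg' s (hD hs)) a ⟨le_rfl, ht.1.trans ht.2⟩ t ht ht.1

theorem stmt_12_general (t₁ t₂ : ℝ) (F F' : ℝ → ℝ)
    (hderiv : ∀ t ∈ Set.Icc t₁ t₂, HasDerivAt F (F' t) t)
    (hF : ∀ t ∈ Set.Icc t₁ t₂, Real.exp (Real.exp 1) ≤ F t)
    (hineq : ∀ t ∈ Set.Icc t₁ t₂,
      F' t ≤ F t * Real.log (F t) * Real.log (Real.log (F t))) :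
    ∀ t ∈ Set.Icc t₁ t₂,
      F t ≤ Real.exp (Real.exp (Real.exp
        ((t - t₁) + Real.log (Real.log (Real.log (F t₁)))))) := by
  have hG' (t) (ht : t ∈ Icc t₁ t₂) : F' t / (F t * log (F t) * log (log (F t))) ≤ 1 := by
    obtain ⟨hF₀, hlog₀, hloglog⟩ := pos_and_log_pos_and_one_le_log_log_of_exp_exp_one_le (hF t ht)
    exact div_le_one_of_le₀ (hineq t ht) (by positivity)
  intro t ht
  have hG := sub_le_mul_sub_of_hasDerivAt_le_on_Icc
    (fun s hs => hasDerivAt_log_log_log (hderiv s hs) (hF s hs)) hG' t ht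
  exact le_exp_exp_exp_of_log_log_log_le (hF t ht) (by linarith)

theorem stmt_12 (t₁ t₂ : ℝ) (ht : t₁ ≤ t₂) (F F' : ℝ → ℝ)
    (hderiv : ∀ t ∈ Set.Icc t₁ t₂, HasDerivAt F (F' t) t)
    (hF : ∀ t ∈ Set.Icc t₁ t₂, Real.exp (Real.exp 1) ≤ F t)
    (hineq : ∀ t ∈ Set.Icc t₁ t₂,
      F' t ≤ F t * Real.log (F t) * Real.log (Real.log (F t))) :
    ∀ t ∈ Set.Icc t₁ t₂,
      F t ≤ Real.exp (Real.exp (Real.exp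
        ((t - t₁) + Real.log (Real.log (Real.log (F t₁)))))) :=
  stmt_12_general t₁ t₂ F F' hderiv hF hineq
end

section
/- Let n ≥ 1 be a real number and let g : [t₁, t₂] → ℝ be continuous and positive, and let K ≥ 0. Suppose that for every closed subinterval [a, b] ⊆ [t₁, t₂] on which g(t) ≥ e^e for all t ∈ [a, b], one has g(b) ≤ exp((1/n)·exp(exp(b - a))) · g(a). Then for every t ∈ [t₁, t₂], g(t) ≤ exp((1/n)·exp(exp(t₂ - t₁))) · max(g(t₁), e^e). -/
open Real Set

/-- On the last maximal interval `[s, b]` where `g ≥ c`, the left endpoint is either `a` or, by the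
intermediate value theorem, a point where `g = c`. -/
theorem ContinuousOn.exists_Icc_forall_le_of_lt {α δ : Type*} [ConditionallyCompleteLinearOrder α]
    [TopologicalSpace α] [OrderTopology α] [DenselyOrdered α] [LinearOrder δ]
    [TopologicalSpace δ] [OrderClosedTopology δ] {a b : α} {g : α → δ} {c : δ}
    (hg : ContinuousOn g (Icc a b)) (hab : a ≤ b) (hc : c < g b) :
    ∃ s ∈ Icc a b, (∀ u ∈ Icc s b, c ≤ g u) ∧ g s ≤ max (g a) c := by
  by_cases hall : ∀ u ∈ Icc a b, c ≤ g u
  · exact ⟨a, left_mem_Icc.2 hab, hall, le_max_left _ _⟩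
  push Not at hall
  set S := {u ∈ Icc a b | g u ≤ c}
  have hS : S.Nonempty := hall.imp fun u ⟨hu, hgu⟩ => ⟨hu, hgu.le⟩
  have hSbdd : BddAbove S := bddAbove_Icc.mono fun _ hu => hu.1
  have hSclosed : IsClosed S := hg.preimage_isClosed_of_isClosed isClosed_Icc isClosed_Iic
  have hsS : sSup S ∈ S := hSclosed.csSup_mem hS hSbdd
  have hgt : ∀ u ∈ Ioc (sSup S) b, c < g u := fun u hu => by
    by_contra! h
    exact (le_csSup hSbdd ⟨⟨hsS.1.1.trans hu.1.le, hu.2⟩, h⟩).not_gt hu.1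
  have hgs : g (sSup S) = c := by
    obtain ⟨u, hu, hgu⟩ := intermediate_value_Icc hsS.1.2 (hg.mono (Icc_subset_Icc_left hsS.1.1))
      ⟨hsS.2, hc.le⟩
    obtain rfl : u = sSup S :=
      le_antisymm (le_csSup hSbdd ⟨⟨hsS.1.1.trans hu.1, hu.2⟩, hgu.le⟩) hu.1
    exact hgu
  refine ⟨sSup S, hsS.1, fun u hu => ?_, hsS.2.trans (le_max_right _ _)⟩
  rcases hu.1.eq_or_lt with rfl | hlt
  · exact hgs.ge
  · exact (hgt u ⟨hlt, hu.2⟩).le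

theorem stmt_14_general (t₁ t₂ : ℝ) (n : ℝ) (hn : 1 ≤ n)
    (g : ℝ → ℝ) (hg : ContinuousOn g (Set.Icc t₁ t₂))
    (hyp : ∀ a b : ℝ, t₁ ≤ a → a ≤ b → b ≤ t₂ →
      (∀ t ∈ Set.Icc a b, Real.exp (Real.exp 1) ≤ g t) →
      g b ≤ Real.exp ((1 / n) * Real.exp (Real.exp (b - a))) * g a) :
    ∀ t ∈ Set.Icc t₁ t₂,
      g t ≤ Real.exp ((1 / n) * Real.exp (Real.exp (t₂ - t₁))) *
        max (g t₁) (Real.exp (Real.exp 1)) := by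
  intro t ⟨ht₁, ht₂⟩
  have hn₀ : 0 ≤ 1 / n := by positivity
  have hC : 1 ≤ exp ((1 / n) * exp (exp (t₂ - t₁))) := one_le_exp (by positivity)
  by_cases hlow : g t ≤ exp (exp 1)
  · calc g t ≤ max (g t₁) (exp (exp 1)) := hlow.trans (le_max_right _ _)
      _ ≤ _ := le_mul_of_one_le_left ((exp_pos _).le.trans (le_max_right _ _)) hC
  obtain ⟨a, ⟨ha₁, hat⟩, hge, hga⟩ :=
    (hg.mono (Icc_subset_Icc_right ht₂)).exists_Icc_forall_le_of_lt ht₁ (not_le.1 hlow)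
  calc g t ≤ exp ((1 / n) * exp (exp (t - a))) * g a := hyp a t ha₁ hat ht₂ hge
    _ ≤ exp ((1 / n) * exp (exp (t₂ - t₁))) * max (g t₁) (exp (exp 1)) := by
      have : 0 ≤ g a := (exp_pos _).le.trans (hge a (left_mem_Icc.2 hat))
      gcongr

theorem stmt_14 (t₁ t₂ : ℝ) (ht : t₁ ≤ t₂) (n : ℝ) (hn : 1 ≤ n) (K : ℝ) (hK : 0 ≤ K)
    (g : ℝ → ℝ) (hg : ContinuousOn g (Set.Icc t₁ t₂))
    (hpos : ∀ t ∈ Set.Icc t₁ t₂, 0 < g t)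
    (hyp : ∀ a b : ℝ, t₁ ≤ a → a ≤ b → b ≤ t₂ →
      (∀ t ∈ Set.Icc a b, Real.exp (Real.exp 1) ≤ g t) →
      g b ≤ Real.exp ((1 / n) * Real.exp (Real.exp (b - a))) * g a) :
    ∀ t ∈ Set.Icc t₁ t₂,
      g t ≤ Real.exp ((1 / n) * Real.exp (Real.exp (t₂ - t₁))) *
        max (g t₁) (Real.exp (Real.exp 1)) :=
  stmt_14_general t₁ t₂ n hn g hg hyp
end
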